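/- For 1 ≤ k ≤ n−1, the number of permutations π of [n] with exactly one descent and exactly k excedances equals the binomial coefficient C(n, k+1). -/

import Mathlib

/-- The permutation `π` of `Fin n`, extended to a function `ℕ → ℕ` (acting as the
identity outside `{0, …, n-1}`); positions are 0-indexed. -/
def permToNat {n : ℕ} (π : Equiv.Perm (Fin n)) (i : ℕ) : ℕ :=
  if h : i < n then (π ⟨i, h⟩ : ℕ) else i

/-- The number of descents of `π`: indices `i ∈ [n-1]` (here 0-indexed `i ∈ {0,…,n-2}`)
with `π(i) > π(i+1)`. -/
def des {n : ℕ} (π : Equiv.Perm (Fin n)) : ℕ :=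
  ((Finset.range (n - 1)).filter fun i => permToNat π (i + 1) < permToNat π i).card

/-- The number of excedances of `π`: indices `i` with `π(i) > i`. -/
def exc {n : ℕ} (π : Equiv.Perm (Fin n)) : ℕ :=
  ((Finset.range n).filter fun i => i < permToNat π i).card

/-- The major index of `π`: the sum of the (1-indexed) descent positions. -/
def maj {n : ℕ} (π : Equiv.Perm (Fin n)) : ℕ :=
  ∑ i ∈ (Finset.range (n - 1)).filter (fun i => permToNat π (i + 1) < permToNat π i), (i + 1)

/-!
A permutation with exactly one descent lists some set `S ≠ univ` increasingly and then `Sᶜ`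
increasingly. If `t` is the least element outside `S`, such a permutation fixes every `i < t`,
exceeds at every `t ≤ i < #S` and satisfies `π i ≤ i` from `#S` on, so it has `#S - t`
excedances, and it has exactly one descent as soon as `t < #S`. Finally
`S ↦ {t} ∪ {x ∈ S | t < x}` is a bijection from the sets with `#S - t = k ≥ 1` onto the
`(k + 1)`-subsets of `Fin n`, with inverse `W ↦ {x | x < min W} ∪ (W \ {min W})`.
-/

open Finset

lemma Fin.val_sub_le_val_sub_of_strictMonoOn {m n : ℕ} {f : Fin m → Fin n} {a b : Fin m}
    (hf : StrictMonoOn f (Set.Icc a b)) (hab : a ≤ b) : (b : ℕ) - a ≤ f b - f a := by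
  have hsub : (Icc a b).image f ⊆ Icc (f a) (f b) := by
    intro y hy
    obtain ⟨x, hx, rfl⟩ := mem_image.1 hy
    rw [mem_Icc] at hx ⊢
    exact ⟨hf.monotoneOn (Set.left_mem_Icc.2 hab) hx hx.1,
      hf.monotoneOn hx (Set.right_mem_Icc.2 hab) hx.2⟩
  have hcard := card_le_card hsub
  rw [card_image_of_injOn (by simpa using hf.injOn), Fin.card_Icc, Fin.card_Icc] at hcard
  omega

lemma permToNat_of_lt {n : ℕ} (π : Equiv.Perm (Fin n)) {i : ℕ} (hi : i < n) :
    permToNat π i = π ⟨i, hi⟩ :=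
  dif_pos hi

lemma permToNat_val {n : ℕ} (π : Equiv.Perm (Fin n)) (i : Fin n) : permToNat π i = π i :=
  dif_pos i.2

section Grassmannian

variable {n : ℕ} (S : Finset (Fin n))

lemma card_compl_fin : #Sᶜ = n - #S := by
  rw [card_compl, Fintype.card_fin]

/-- Lists `S` increasingly in the first `#S` positions and `Sᶜ` increasingly after them. -/
noncomputable def grassmannPerm : Equiv.Perm (Fin n) :=
  Equiv.ofBijective
    (fun i => if h : (i : ℕ) < #S then S.orderEmbOfFin rfl ⟨i, h⟩
      else Sᶜ.orderEmbOfFin (card_compl_fin S) ⟨i - #S, by have := i.2; omega⟩)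
    (Finite.injective_iff_bijective.1 <| by
      refine Function.Injective.dite (fun i : Fin n => (i : ℕ) < #S)
        (f := fun i => S.orderEmbOfFin rfl ⟨i.1, i.2⟩)
        (f' := fun i =>
          Sᶜ.orderEmbOfFin (card_compl_fin S) ⟨i.1 - #S, by have := i.1.2; omega⟩)
        (fun a b h => ?_) (fun a b h => ?_) (fun h => ?_)
      · simpa [Subtype.ext_iff, Fin.ext_iff] using h
      · have := a.2; have := b.2
        simp only [EmbeddingLike.apply_eq_iff_eq, Fin.mk.injEq] at h
        exact Subtype.ext (Fin.ext (by omega))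
      · exact (mem_compl.1 (orderEmbOfFin_mem Sᶜ _ _)) (h ▸ orderEmbOfFin_mem S _ _))

lemma grassmannPerm_apply_of_lt {i : Fin n} (hi : (i : ℕ) < #S) :
    grassmannPerm S i = S.orderEmbOfFin rfl ⟨i, hi⟩ :=
  dif_pos hi

lemma grassmannPerm_apply_of_le {i : Fin n} (hi : #S ≤ (i : ℕ)) :
    grassmannPerm S i = Sᶜ.orderEmbOfFin (card_compl_fin S) ⟨i - #S, by have := i.2; omega⟩ :=
  dif_neg (by omega)

lemma grassmannPerm_mem_iff (i : Fin n) : grassmannPerm S i ∈ S ↔ (i : ℕ) < #S := by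
  by_cases hi : (i : ℕ) < #S
  · simpa [grassmannPerm_apply_of_lt S hi] using hi
  · simpa [grassmannPerm_apply_of_le S (not_lt.1 hi), hi] using
      mem_compl.1 (orderEmbOfFin_mem Sᶜ _ _)

lemma mem_iff_grassmannPerm_symm_lt (x : Fin n) :
    x ∈ S ↔ ((grassmannPerm S).symm x : ℕ) < #S := by
  simpa using grassmannPerm_mem_iff S ((grassmannPerm S).symm x)

lemma strictMonoOn_grassmannPerm_lt : StrictMonoOn (grassmannPerm S) {i | (i : ℕ) < #S} := by
  intro i hi j hj hij
  rw [grassmannPerm_apply_of_lt S hi, grassmannPerm_apply_of_lt S hj]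
  exact (S.orderEmbOfFin rfl).strictMono hij

lemma strictMonoOn_grassmannPerm_ge : StrictMonoOn (grassmannPerm S) {i | #S ≤ (i : ℕ)} := by
  intro i hi j hj hij
  rw [grassmannPerm_apply_of_le S hi, grassmannPerm_apply_of_le S hj]
  refine (Sᶜ.orderEmbOfFin _).strictMono (Fin.mk_lt_mk.2 ?_)
  have : (i : ℕ) < j := hij
  have : #S ≤ (i : ℕ) := hi
  omega

lemma le_grassmannPerm_apply {i : Fin n} (hi : (i : ℕ) < #S) : i ≤ grassmannPerm S i := by
  have h := Fin.val_sub_le_val_sub_of_strictMonoOn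
    ((strictMonoOn_grassmannPerm_lt S).mono fun j hj => show (j : ℕ) < #S from
      lt_of_le_of_lt (Fin.le_def.1 hj.2) hi)
    (show (⟨0, by omega⟩ : Fin n) ≤ i from Fin.le_def.2 (Nat.zero_le _))
  simp only [Nat.sub_zero] at h
  rw [Fin.le_def]
  omega

lemma grassmannPerm_apply_le {i : Fin n} (hi : #S ≤ (i : ℕ)) : grassmannPerm S i ≤ i := by
  have hlast : i ≤ ⟨n - 1, by omega⟩ := Fin.mk_le_mk.2 (by omega)
  have h := Fin.val_sub_le_val_sub_of_strictMonoOn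
    ((strictMonoOn_grassmannPerm_ge S).mono fun j hj => show #S ≤ (j : ℕ) from
      le_trans hi (Fin.le_def.1 hj.1)) hlast
  have := (grassmannPerm S ⟨n - 1, by omega⟩).2
  rw [Fin.le_def]
  simp only at h
  omega

variable {S} {t : Fin n}

lemma mem_of_lt_of_isLeast_compl (ht : IsLeast (↑S)ᶜ t) {x : Fin n} (hx : x < t) : x ∈ S := by
  by_contra h
  exact (ht.2 h).not_gt hx

lemma le_card_of_isLeast_compl (ht : IsLeast (↑S)ᶜ t) : (t : ℕ) ≤ #S := by
  rw [← Fin.card_Iio]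
  exact card_le_card fun x hx => mem_of_lt_of_isLeast_compl ht (mem_Iio.1 hx)

lemma grassmannPerm_apply_of_lt_of_isLeast (ht : IsLeast (↑S)ᶜ t) (i : Fin n) (hi : i < t) :
    grassmannPerm S i = i := by
  induction i using WellFoundedLT.induction with
  | _ i ih =>
  have hiS : (i : ℕ) < #S := lt_of_lt_of_le hi (le_card_of_isLeast_compl ht)
  obtain ⟨j, hj⟩ := (grassmannPerm S).surjective i
  have hjS : (j : ℕ) < #S :=
    (grassmannPerm_mem_iff S j).1 (hj ▸ mem_of_lt_of_isLeast_compl ht hi)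
  rcases lt_trichotomy j i with hji | rfl | hij
  · exact absurd (hj.symm.trans (ih j hji (hji.trans hi))) hji.ne'
  · exact hj
  · have h₁ := strictMonoOn_grassmannPerm_lt S hiS hjS hij
    have h₂ := le_grassmannPerm_apply S hiS
    rw [hj] at h₁
    exact absurd h₁ (not_lt.2 h₂)

lemma lt_grassmannPerm_apply_of_isLeast (ht : IsLeast (↑S)ᶜ t) {i : Fin n} (hti : t ≤ i)
    (hi : (i : ℕ) < #S) : i < grassmannPerm S i := by
  refine lt_of_le_of_ne (le_grassmannPerm_apply S hi) fun hfix => ht.1 ?_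
  have htS : (t : ℕ) < #S := lt_of_le_of_lt (Fin.le_def.1 hti) hi
  have hgap := Fin.val_sub_le_val_sub_of_strictMonoOn
    ((strictMonoOn_grassmannPerm_lt S).mono fun j hj => show (j : ℕ) < #S from
      lt_of_le_of_lt (Fin.le_def.1 hj.2) hi) hti
  have hle := Fin.le_def.1 (le_grassmannPerm_apply S htS)
  have hmono := Fin.le_def.1 ((strictMonoOn_grassmannPerm_lt S).monotoneOn htS hi hti)
  have : grassmannPerm S t = t := Fin.ext (by have := congrArg Fin.val hfix; omega)
  simpa [this] using (grassmannPerm_mem_iff S t).2 htS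

lemma grassmannPerm_apply_card_of_isLeast (ht : IsLeast (↑S)ᶜ t) {i : Fin n}
    (hi : (i : ℕ) = #S) :
    grassmannPerm S i = t := by
  have hpos : 0 < n - #S := by have := i.2; omega
  rw [grassmannPerm_apply_of_le S hi.ge]
  simp only [hi, Nat.sub_self]
  rw [orderEmbOfFin_zero _ hpos]
  exact (isLeast_min' _ _).unique (by rwa [coe_compl])

lemma lt_grassmannPerm_apply_iff (ht : IsLeast (↑S)ᶜ t) (i : Fin n) :
    i < grassmannPerm S i ↔ t ≤ i ∧ (i : ℕ) < #S := by
  refine ⟨fun h => ⟨?_, ?_⟩, fun h => lt_grassmannPerm_apply_of_isLeast ht h.1 h.2⟩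
  · by_contra hit
    rw [grassmannPerm_apply_of_lt_of_isLeast ht i (not_le.1 hit)] at h
    exact h.false
  · by_contra hiS
    exact (grassmannPerm_apply_le S (not_lt.1 hiS)).not_gt h

lemma exc_grassmannPerm (ht : IsLeast (↑S)ᶜ t) : exc (grassmannPerm S) = #S - t := by
  have hSn : #S ≤ n := by simpa using card_le_univ S
  have hexc : (range n).filter (fun i => i < permToNat (grassmannPerm S) i) = Ico (t : ℕ) #S := by
    ext i
    simp only [mem_filter, mem_range, mem_Ico]
    constructor
    · rintro ⟨hi, h⟩
      rw [permToNat_of_lt _ hi] at h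
      exact (lt_grassmannPerm_apply_iff ht ⟨i, hi⟩).1 h
    · intro h
      have hi : i < n := by omega
      rw [permToNat_of_lt _ hi]
      exact ⟨hi, (lt_grassmannPerm_apply_iff ht ⟨i, hi⟩).2 h⟩
  rw [exc, hexc, Nat.card_Ico]

lemma des_grassmannPerm (ht : IsLeast (↑S)ᶜ t) (htS : (t : ℕ) < #S) :
    des (grassmannPerm S) = 1 := by
  have hSn : #S < n := by simpa using card_lt_univ_of_notMem ht.1
  rw [des, card_eq_one]
  refine ⟨#S - 1, ?_⟩
  ext i
  simp only [mem_filter, mem_range, mem_singleton]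
  constructor
  · rintro ⟨hi, h⟩
    rw [permToNat_of_lt _ (by omega : i < n), permToNat_of_lt _ (by omega : i + 1 < n)] at h
    by_contra hne
    rcases lt_or_ge (i + 1) #S with hlt | hge
    · exact (strictMonoOn_grassmannPerm_lt S (show i < #S by omega) hlt
        (Fin.mk_lt_mk.2 (Nat.lt_succ_self i))).not_gt h
    · exact (strictMonoOn_grassmannPerm_ge S (show #S ≤ i by omega) (show #S ≤ i + 1 by omega)
        (Fin.mk_lt_mk.2 (Nat.lt_succ_self i))).not_gt h
  · rintro rfl
    have hlast : t ≤ ⟨#S - 1, by omega⟩ := Fin.le_def.2 (show (t : ℕ) ≤ #S - 1 by omega)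
    refine ⟨by omega, ?_⟩
    rw [permToNat_of_lt _ (by omega : #S - 1 < n), permToNat_of_lt _ (by omega : #S - 1 + 1 < n),
      grassmannPerm_apply_card_of_isLeast ht (show #S - 1 + 1 = #S by omega)]
    exact Fin.lt_def.1 <| lt_of_le_of_lt hlast <|
      lt_grassmannPerm_apply_of_isLeast ht hlast (show #S - 1 < #S by omega)

lemma isLeast_grassmannPerm_ne (ht : IsLeast (↑S)ᶜ t) (htS : (t : ℕ) < #S) :
    IsLeast {i | grassmannPerm S i ≠ i} t :=
  ⟨(lt_grassmannPerm_apply_of_isLeast ht le_rfl htS).ne',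
    fun i hi => not_lt.1 fun hit => hi (grassmannPerm_apply_of_lt_of_isLeast ht i hit)⟩

/-- The least point of `Sᶜ` is the least non-fixed point, and `#S` is then recovered from the
number of excedances. -/
lemma eq_of_grassmannPerm_eq {S' : Finset (Fin n)} {t' : Fin n} (ht : IsLeast (↑S)ᶜ t)
    (htS : (t : ℕ) < #S) (ht' : IsLeast (↑S')ᶜ t') (htS' : (t' : ℕ) < #S')
    (h : grassmannPerm S = grassmannPerm S') : S = S' := by
  have htt : t = t' :=
    (isLeast_grassmannPerm_ne ht htS).unique (h ▸ isLeast_grassmannPerm_ne ht' htS')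
  have hcard : #S = #S' := by
    have := congrArg exc h
    rw [exc_grassmannPerm ht, exc_grassmannPerm ht', htt] at this
    omega
  ext x
  rw [mem_iff_grassmannPerm_symm_lt, mem_iff_grassmannPerm_symm_lt, h, hcard]

variable (S) in
lemma grassmannPerm_eq {π : Equiv.Perm (Fin n)} (hS : ∀ i, π i ∈ S ↔ (i : ℕ) < #S)
    (hlo : StrictMonoOn π {i | (i : ℕ) < #S}) (hhi : StrictMonoOn π {i | #S ≤ (i : ℕ)}) :
    grassmannPerm S = π := by
  have hSn : #S ≤ n := by simpa using card_le_univ S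
  ext i : 1
  by_cases hi : (i : ℕ) < #S
  · have hf := orderEmbOfFin_unique (s := S) rfl (f := fun j => π (Fin.castLE hSn j))
      (fun j => (hS _).2 j.2) (fun a b hab => hlo a.2 b.2 hab)
    rw [grassmannPerm_apply_of_lt S hi, ← hf]
    rfl
  · have hf := orderEmbOfFin_unique (s := Sᶜ) (card_compl_fin S)
      (f := fun j => π ⟨#S + j, by omega⟩)
      (fun j => mem_compl.2 fun hj => by have := (hS _).1 hj; simp at this)
      (fun a b hab => hhi (show #S ≤ #S + (a : ℕ) by omega)
        (show #S ≤ #S + (b : ℕ) by omega)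
        (Fin.mk_lt_mk.2 (by have : (a : ℕ) < b := hab; omega)))
    rw [grassmannPerm_apply_of_le S (not_lt.1 hi), ← hf]
    exact congrArg π (Fin.ext (by simp only; omega))

end Grassmannian

lemma exists_strictMonoOn_of_des_eq_one {n : ℕ} {π : Equiv.Perm (Fin n)} (h : des π = 1) :
    ∃ m < n, StrictMonoOn π {i | (i : ℕ) < m} ∧ StrictMonoOn π {i | m ≤ (i : ℕ)} := by
  obtain ⟨D, hD⟩ := card_eq_one.1 h
  have hDn : D + 1 < n := by
    have := (mem_filter.1 (hD ▸ mem_singleton_self D)).1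
    rw [mem_range] at this
    omega
  have step (i : ℕ) (hi : i + 1 < n) (hiD : i ≠ D) : permToNat π i < permToNat π (i + 1) := by
    have hnot : ¬ permToNat π (i + 1) < permToNat π i := fun hlt =>
      hiD <| mem_singleton.1 <| hD ▸ mem_filter.2 ⟨mem_range.2 (by omega), hlt⟩
    refine lt_of_le_of_ne (not_lt.1 hnot) fun heq => ?_
    rw [permToNat_of_lt _ (by omega : i < n), permToNat_of_lt _ hi, ← Fin.ext_iff] at heq
    simpa using π.injective heq
  have hlo : StrictMonoOn (permToNat π) (Set.Iic D) :=
    strictMonoOn_of_lt_add_one Set.ordConnected_Iic fun a _ _ ha =>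
      step a (by have := Set.mem_Iic.1 ha; omega) (by have := Set.mem_Iic.1 ha; omega)
  have hhi : StrictMonoOn (permToNat π) (Set.Icc (D + 1) (n - 1)) :=
    strictMonoOn_of_lt_add_one Set.ordConnected_Icc fun a _ ha ha' =>
      step a (by have := (Set.mem_Icc.1 ha').2; omega) (by have := (Set.mem_Icc.1 ha).1; omega)
  refine ⟨D + 1, hDn, fun i hi j hj hij => ?_, fun i hi j hj hij => ?_⟩
  · have := hlo (show (i : ℕ) ≤ D by have : (i : ℕ) < D + 1 := hi; omega)
      (show (j : ℕ) ≤ D by have : (j : ℕ) < D + 1 := hj; omega) hij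
    rwa [permToNat_val, permToNat_val] at this
  · have hi' : D + 1 ≤ (i : ℕ) := hi
    have hj' : D + 1 ≤ (j : ℕ) := hj
    have := hhi (Set.mem_Icc.2 ⟨hi', by have := i.2; omega⟩)
      (Set.mem_Icc.2 ⟨hj', by have := j.2; omega⟩) hij
    rwa [permToNat_val, permToNat_val] at this

lemma exists_grassmannPerm_eq_of_des_eq_one {n : ℕ} {π : Equiv.Perm (Fin n)} (h : des π = 1) :
    ∃ S : Finset (Fin n), Sᶜ.Nonempty ∧ grassmannPerm S = π := by
  obtain ⟨m, hmn, hlo, hhi⟩ := exists_strictMonoOn_of_des_eq_one h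
  set S := ({i | (i : ℕ) < m} : Finset (Fin n)).image π
  have hcard : #S = m := by
    rw [card_image_of_injective _ π.injective, Fin.card_filter_val_lt]
    omega
  have hmem (i : Fin n) : π i ∈ S ↔ (i : ℕ) < #S := by
    simp [S, hcard, π.injective.eq_iff]
  refine ⟨S, card_pos.1 ?_, grassmannPerm_eq S hmem (hcard ▸ hlo) (hcard ▸ hhi)⟩
  rw [card_compl_fin, hcard]
  omega

section PrefixSet

variable {n : ℕ} {W : Finset (Fin n)}

/-- For `W` with least element `t`, the set `{x | x < t} ∪ (W \ {t})`. -/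
def prefixSet (W : Finset (Fin n)) : Finset (Fin n) :=
  {x | (∀ w ∈ W, x < w) ∨ (x ∈ W ∧ ∃ w ∈ W, w < x)}

lemma mem_prefixSet (hW : W.Nonempty) {x : Fin n} :
    x ∈ prefixSet W ↔ x < W.min' hW ∨ (x ∈ W ∧ W.min' hW < x) := by
  have hmin : (∃ w ∈ W, w < x) ↔ W.min' hW < x :=
    ⟨fun ⟨w, hw, hwx⟩ => (W.min'_le w hw).trans_lt hwx, fun h => ⟨_, W.min'_mem hW, h⟩⟩
  simp [prefixSet, lt_min'_iff, hmin]

lemma isLeast_compl_prefixSet (hW : W.Nonempty) : IsLeast (↑(prefixSet W))ᶜ (W.min' hW) := by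
  refine ⟨fun h => ?_, fun x hx => not_lt.1 fun hlt => hx ?_⟩
  · rcases (mem_prefixSet hW).1 h with h | h
    exacts [h.false, h.2.false]
  · exact (mem_prefixSet hW).2 (Or.inl hlt)

lemma card_prefixSet (hW : W.Nonempty) : #(prefixSet W) = W.min' hW + (#W - 1) := by
  have hsplit : prefixSet W = Iio (W.min' hW) ∪ W.erase (W.min' hW) := by
    ext x
    rw [mem_prefixSet hW, mem_union, mem_Iio, mem_erase]
    constructor
    · rintro (h | ⟨hx, h⟩)
      exacts [Or.inl h, Or.inr ⟨h.ne', hx⟩]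
    · rintro (h | ⟨hne, hx⟩)
      exacts [Or.inl h, Or.inr ⟨hx, lt_of_le_of_ne (W.min'_le x hx) hne.symm⟩]
  have hdisj : Disjoint (Iio (W.min' hW)) (W.erase (W.min' hW)) :=
    disjoint_left.2 fun x hx hx' => (mem_Iio.1 hx).not_ge (W.min'_le x (mem_of_mem_erase hx'))
  rw [hsplit, card_union_of_disjoint hdisj, Fin.card_Iio, card_erase_of_mem (W.min'_mem hW)]

lemma mem_iff_of_prefixSet (hW : W.Nonempty) {x : Fin n} :
    x ∈ W ↔ x = W.min' hW ∨ (W.min' hW < x ∧ x ∈ prefixSet W) := by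
  rw [mem_prefixSet hW]
  constructor
  · intro hx
    rcases (W.min'_le x hx).lt_or_eq with h | h
    exacts [Or.inr ⟨h, Or.inr ⟨hx, h⟩⟩, Or.inl h.symm]
  · rintro (rfl | ⟨h, h' | h'⟩)
    exacts [W.min'_mem hW, absurd h h'.asymm, h'.1]

lemma prefixSet_injOn : Set.InjOn prefixSet {W : Finset (Fin n) | W.Nonempty} := by
  intro W hW W' hW' h
  have ht : W.min' hW = W'.min' hW' :=
    (isLeast_compl_prefixSet hW).unique (h ▸ isLeast_compl_prefixSet hW')
  ext x
  rw [mem_iff_of_prefixSet hW, mem_iff_of_prefixSet hW', ht, h]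

lemma exists_prefixSet_eq {S : Finset (Fin n)} (hS : Sᶜ.Nonempty) :
    ∃ W : Finset (Fin n), W.Nonempty ∧ prefixSet W = S := by
  set t := Sᶜ.min' hS
  have ht : IsLeast (↑S)ᶜ t := by simpa [t] using isLeast_min' Sᶜ hS
  set W := insert t (S.filter (t < ·))
  have hmin : W.min' (insert_nonempty _ _) = t :=
    le_antisymm (W.min'_le t (mem_insert_self _ _))
      (W.le_min' _ _ fun y hy => by
        rcases mem_insert.1 hy with rfl | hy
        exacts [le_rfl, (mem_filter.1 hy).2.le])
  refine ⟨W, insert_nonempty _ _, ?_⟩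
  ext x
  rw [mem_prefixSet (insert_nonempty _ _), hmin]
  simp only [mem_insert, mem_filter]
  constructor
  · rintro (hx | ⟨hx | hx, htx⟩)
    exacts [mem_of_lt_of_isLeast_compl ht hx, absurd hx htx.ne', hx.1]
  · intro hx
    rcases lt_or_gt_of_ne (show x ≠ t from fun h => ht.1 (h ▸ hx)) with h | h
    exacts [Or.inl h, Or.inr ⟨Or.inr ⟨hx, h⟩, h⟩]

lemma exc_grassmannPerm_prefixSet (hW : W.Nonempty) :
    exc (grassmannPerm (prefixSet W)) = #W - 1 := by
  rw [exc_grassmannPerm (isLeast_compl_prefixSet hW), card_prefixSet hW]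
  omega

lemma min'_lt_card_prefixSet (hW : 2 ≤ #W) :
    ((W.min' (card_pos.1 (by omega)) : Fin n) : ℕ) < #(prefixSet W) := by
  rw [card_prefixSet (card_pos.1 (by omega))]
  omega

lemma des_grassmannPerm_prefixSet (hW : 2 ≤ #W) : des (grassmannPerm (prefixSet W)) = 1 :=
  des_grassmannPerm (isLeast_compl_prefixSet (card_pos.1 (by omega))) (min'_lt_card_prefixSet hW)

lemma grassmannPerm_prefixSet_injOn :
    Set.InjOn (fun W => grassmannPerm (prefixSet W)) {W : Finset (Fin n) | 2 ≤ #W} :=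
  fun W hW W' hW' h => prefixSet_injOn (card_pos.1 (by have : 2 ≤ #W := hW; omega))
    (card_pos.1 (by have : 2 ≤ #W' := hW'; omega)) <|
    eq_of_grassmannPerm_eq (isLeast_compl_prefixSet _) (min'_lt_card_prefixSet hW)
      (isLeast_compl_prefixSet _) (min'_lt_card_prefixSet hW') h

lemma exists_grassmannPerm_prefixSet_eq_of_des_eq_one {π : Equiv.Perm (Fin n)} (h : des π = 1) :
    ∃ W : Finset (Fin n), W.Nonempty ∧ grassmannPerm (prefixSet W) = π := by
  obtain ⟨S, hS, rfl⟩ := exists_grassmannPerm_eq_of_des_eq_one h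
  obtain ⟨W, hW, rfl⟩ := exists_prefixSet_eq hS
  exact ⟨W, hW, rfl⟩

end PrefixSet

theorem card_one_descent_k_excedances_general (n k : ℕ) (hk : 1 ≤ k) :
    (Finset.univ.filter fun π : Equiv.Perm (Fin n) => des π = 1 ∧ exc π = k).card =
      n.choose (k + 1) := by
  have hsets : #(powersetCard (k + 1) (univ : Finset (Fin n))) = n.choose (k + 1) := by simp
  rw [← hsets]
  symm
  refine card_nbij (fun W => grassmannPerm (prefixSet W)) (fun W hW => ?_)
    (grassmannPerm_prefixSet_injOn.mono fun W hW => ?_) (fun π hπ => ?_)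
  · have hW : #W = k + 1 := mem_powersetCard_univ.1 hW
    simp [des_grassmannPerm_prefixSet (W := W) (by omega),
      exc_grassmannPerm_prefixSet (card_pos.1 (by omega : 0 < #W)), hW]
  · rw [mem_coe, mem_powersetCard_univ] at hW
    exact show 2 ≤ #W by omega
  · obtain ⟨hdes, hexc⟩ := (mem_filter.1 hπ).2
    obtain ⟨W, hW, rfl⟩ := exists_grassmannPerm_prefixSet_eq_of_des_eq_one hdes
    rw [exc_grassmannPerm_prefixSet hW] at hexc
    exact ⟨W, mem_powersetCard_univ.2 (by have := hW.card_pos; omega), rfl⟩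

/-- Li: for `1 ≤ k ≤ n - 1`, the number of permutations of `[n]` with exactly one
descent and exactly `k` excedances is `C(n, k+1)`. -/
theorem card_one_descent_k_excedances (n k : ℕ) (hk : 1 ≤ k) (hkn : k ≤ n - 1) :
    (Finset.univ.filter fun π : Equiv.Perm (Fin n) => des π = 1 ∧ exc π = k).card =
      n.choose (k + 1) :=
  card_one_descent_k_excedances_general n k hk
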